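/- Let ℓ ≥ 2 and τ ≥ 2, and set f_{ℓ−1}(s) = (1−v)^{ℓ−1} v where v = √(s/(τ−1)). Then ∫_0^{τ−1} f_{ℓ−1}(s)² ds = 2(τ−1)·(2ℓ−2)!·3!/(2ℓ+2)! ≤ 12(τ−1)/(2ℓ)^4, and hence Σ_{s=τ_0}^{τ−1} f_{ℓ−1}(s)² ≤ 1 + (τ−1)/ℓ^4. -/

import Mathlib

/-
With `T = τ - 1`, the substitution `s = T v²` turns the integral into
`2T ∫₀¹ v³ (1 - v)^(2ℓ-2) dv`, a Beta integral equal to `2T · 3! (2ℓ-2)! / (2ℓ+2)!`;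
then `(2ℓ-1)(2ℓ)(2ℓ+1)(2ℓ+2) ≥ (2ℓ)⁴` gives the bound `12T / (2ℓ)⁴`.
The summand `s ↦ ((1 - √(s/T))^(ℓ-1) √(s/T))²` increases up to `s = T/ℓ²` and decreases after,
so the sum exceeds the integral by at most two values near the peak, each at most `1/16`
because `(1 - v)^(ℓ-1) v ≤ (1 - v) v ≤ 1/4`.
-/

open Set Nat intervalIntegral

theorem integral_one_sub_pow (n : ℕ) : ∫ x in (0 : ℝ)..1, (1 - x) ^ n = 1 / (n + 1) := by
  simp [integral_comp_sub_left fun x : ℝ => x ^ n]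

theorem integral_pow_mul_one_sub_pow (m n : ℕ) :
    ∫ x in (0 : ℝ)..1, x ^ m * (1 - x) ^ n = m ! * n ! / (m + n + 1)! := by
  induction m generalizing n with
  | zero =>
    simp only [pow_zero, one_mul, integral_one_sub_pow, factorial_zero, zero_add, factorial_succ]
    push_cast
    field_simp
  | succ m ih =>
    -- by parts: `∫ x^(m+1) (1-x)^n = (m+1)/(n+1) ∫ x^m (1-x)^(n+1)`
    have hparts := integral_mul_deriv_eq_deriv_mul (a := 0) (b := 1)
      (u := fun x : ℝ => x ^ (m + 1)) (u' := fun x => (m + 1) * x ^ m)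
      (v := fun x : ℝ => -(1 - x) ^ (n + 1) / (n + 1)) (v' := fun x => (1 - x) ^ n)
      (fun x _ => by simpa using hasDerivAt_pow (m + 1) x)
      (fun x _ => by
        refine ((((hasDerivAt_id' x).const_sub 1).fun_pow (n + 1)).fun_neg.div_const _
          ).congr_deriv ?_
        push_cast; field_simp)
      (Continuous.intervalIntegrable (by fun_prop) _ _)
      (Continuous.intervalIntegrable (by fun_prop) _ _)
    have hrw : ∀ x : ℝ, (m + 1) * x ^ m * (-(1 - x) ^ (n + 1) / (n + 1))
        = -((m + 1) / (n + 1)) * (x ^ m * (1 - x) ^ (n + 1)) := fun x => by ring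
    simp only [hrw, integral_const_mul, ih] at hparts
    rw [hparts, show m + (n + 1) + 1 = m + 1 + n + 1 by ring]
    simp only [Nat.factorial_succ]
    push_cast
    field_simp
    simp

theorem integral_comp_sqrt_div (F : ℝ → ℝ) (hF : Continuous F) {T : ℝ} (hT : 0 < T) :
    ∫ s in (0 : ℝ)..T, F (√(s / T)) = 2 * T * ∫ v in (0 : ℝ)..1, v * F v := by
  have hsub := integral_comp_mul_deriv (a := 0) (b := 1) (f := fun v => T * v ^ 2)
    (f' := fun v => 2 * T * v) (g := fun s => F (√(s / T)))
    (fun v _ => ((hasDerivAt_pow 2 v).const_mul T).congr_deriv (by ring))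
    (by fun_prop) (by fun_prop)
  simp only [zero_pow two_ne_zero, mul_zero, one_pow, mul_one] at hsub
  rw [← hsub, ← integral_const_mul]
  refine integral_congr fun v hv => ?_
  rw [uIcc_of_le zero_le_one] at hv
  simp only [Function.comp_apply, mul_div_cancel_left₀ _ hT.ne', Real.sqrt_sq hv.1]
  ring

theorem integral_sq_one_sub_sqrt_pow_mul {ℓ : ℕ} (hℓ : 1 ≤ ℓ) {T : ℝ} (hT : 0 < T) :
    ∫ s in (0 : ℝ)..T, ((1 - √(s / T)) ^ (ℓ - 1) * √(s / T)) ^ 2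
      = 2 * T * ((2 * ℓ - 2)! : ℝ) * (3 ! : ℝ) / ((2 * ℓ + 2)! : ℝ) := by
  have hpow : ∀ v : ℝ, v * ((1 - v) ^ (ℓ - 1) * v) ^ 2 = v ^ 3 * (1 - v) ^ (2 * ℓ - 2) :=
    fun v => by rw [show 2 * ℓ - 2 = (ℓ - 1) * 2 by omega, pow_mul]; ring
  rw [integral_comp_sqrt_div (fun v => ((1 - v) ^ (ℓ - 1) * v) ^ 2) (by fun_prop) hT]
  simp only [hpow, integral_pow_mul_one_sub_pow, show 3 + (2 * ℓ - 2) + 1 = 2 * ℓ + 2 by omega]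
  ring

theorem pow_four_mul_factorial_le (n : ℕ) : (n + 2) ^ 4 * n ! ≤ (n + 4)! := by
  have hprod : (n + 2) ^ 4 ≤ (n + 4) * (n + 1) * ((n + 3) * (n + 2)) :=
    calc (n + 2) ^ 4 = (n + 2) ^ 2 * (n + 2) ^ 2 := by ring
      _ ≤ _ := Nat.mul_le_mul (by nlinarith) (by nlinarith)
  calc (n + 2) ^ 4 * n ! ≤ (n + 4) * (n + 1) * ((n + 3) * (n + 2)) * n ! := by gcongr
    _ = (n + 4)! := by simp only [Nat.factorial_succ]; ring

theorem mul_factorial_div_factorial_le_div_pow_four {ℓ : ℕ} (hℓ : 1 ≤ ℓ) {T : ℝ} (hT : 0 ≤ T) :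
    2 * T * ((2 * ℓ - 2)! : ℝ) * (3 ! : ℝ) / ((2 * ℓ + 2)! : ℝ) ≤ 12 * T / (2 * (ℓ : ℝ)) ^ 4 := by
  have hfac : ((2 * ℓ) ^ 4 * (2 * ℓ - 2)! : ℝ) ≤ (2 * ℓ + 2)! := by
    have := pow_four_mul_factorial_le (2 * ℓ - 2)
    rw [show 2 * ℓ - 2 + 2 = 2 * ℓ by omega, show 2 * ℓ - 2 + 4 = 2 * ℓ + 2 by omega] at this
    exact_mod_cast this
  have hℓ' : (0 : ℝ) < ℓ := by exact_mod_cast hℓ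
  calc 2 * T * ((2 * ℓ - 2)! : ℝ) * (3 ! : ℝ) / ((2 * ℓ + 2)! : ℝ)
      = 12 * T * ((2 * ℓ - 2)! / (2 * ℓ + 2)!) := by simp only [Nat.factorial]; push_cast; ring
    _ ≤ 12 * T * (1 / (2 * ℓ) ^ 4) := by
      refine mul_le_mul_of_nonneg_left ?_ (by positivity)
      rw [div_le_div_iff₀ (by positivity) (by positivity)]
      linarith
    _ = 12 * T / (2 * (ℓ : ℝ)) ^ 4 := by ring

theorem hasDerivAt_one_sub_pow_mul {ℓ : ℕ} (hℓ : 2 ≤ ℓ) (v : ℝ) :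
    HasDerivAt (fun v : ℝ => (1 - v) ^ (ℓ - 1) * v) ((1 - v) ^ (ℓ - 2) * (1 - ℓ * v)) v := by
  refine ((((hasDerivAt_id' v).const_sub 1).fun_pow (ℓ - 1)).mul (hasDerivAt_id' v)).congr_deriv ?_
  obtain ⟨k, rfl⟩ : ∃ k, ℓ = k + 2 := ⟨ℓ - 2, by omega⟩
  simp only [show k + 2 - 1 = k + 1 by omega, Nat.add_sub_cancel]
  push_cast
  ring

theorem monotoneOn_one_sub_pow_mul {ℓ : ℕ} (hℓ : 2 ≤ ℓ) :
    MonotoneOn (fun v : ℝ => (1 - v) ^ (ℓ - 1) * v) (Icc 0 (ℓ : ℝ)⁻¹) := by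
  have hℓ' : (2 : ℝ) ≤ ℓ := by exact_mod_cast hℓ
  refine monotoneOn_of_deriv_nonneg (convex_Icc _ _) (by fun_prop)
    (fun v _ => (hasDerivAt_one_sub_pow_mul hℓ v).differentiableAt.differentiableWithinAt)
    fun v hv => ?_
  rw [interior_Icc] at hv
  have hℓv : ℓ * v < 1 := by rw [← lt_inv_mul_iff₀ (by positivity), mul_one]; exact hv.2
  rw [(hasDerivAt_one_sub_pow_mul hℓ v).deriv]
  exact mul_nonneg (pow_nonneg (by nlinarith [hv.1]) _) (by linarith)

theorem antitoneOn_one_sub_pow_mul {ℓ : ℕ} (hℓ : 2 ≤ ℓ) :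
    AntitoneOn (fun v : ℝ => (1 - v) ^ (ℓ - 1) * v) (Icc (ℓ : ℝ)⁻¹ 1) := by
  refine antitoneOn_of_deriv_nonpos (convex_Icc _ _) (by fun_prop)
    (fun v _ => (hasDerivAt_one_sub_pow_mul hℓ v).differentiableAt.differentiableWithinAt)
    fun v hv => ?_
  rw [interior_Icc] at hv
  have hℓv : 1 < ℓ * v := (inv_lt_iff_one_lt_mul₀' (by positivity)).1 hv.1
  rw [(hasDerivAt_one_sub_pow_mul hℓ v).deriv]
  exact mul_nonpos_of_nonneg_of_nonpos (pow_nonneg (by linarith [hv.2]) _) (by linarith)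

theorem one_sub_pow_mul_nonneg (ℓ : ℕ) {v : ℝ} (hv : v ∈ Icc (0 : ℝ) 1) :
    0 ≤ (1 - v) ^ (ℓ - 1) * v :=
  mul_nonneg (pow_nonneg (by linarith [hv.2]) _) hv.1

theorem one_sub_pow_mul_le {ℓ : ℕ} (hℓ : 2 ≤ ℓ) {v : ℝ} (hv : v ∈ Icc (0 : ℝ) 1) :
    (1 - v) ^ (ℓ - 1) * v ≤ 1 / 4 := by
  have h1v : 0 ≤ 1 - v := by linarith [hv.2]
  calc (1 - v) ^ (ℓ - 1) * v ≤ (1 - v) * v := by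
        gcongr
        · exact hv.1
        · exact pow_le_of_le_one h1v (by linarith [hv.1]) (by omega)
    _ ≤ 1 / 4 := by nlinarith [sq_nonneg (1 - 2 * v)]

theorem mapsTo_sqrt_div_Icc {T a b : ℝ} (hT : 0 < T) (ha : 0 ≤ a) (hb : 0 ≤ b) :
    MapsTo (fun s => √(s / T)) (Icc (T * a ^ 2) (T * b ^ 2)) (Icc a b) := by
  intro s hs
  constructor
  · calc a = √(a ^ 2) := (Real.sqrt_sq ha).symm
      _ ≤ √(s / T) := Real.sqrt_le_sqrt (by rw [le_div_iff₀ hT]; linarith [hs.1])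
  · calc √(s / T) ≤ √(b ^ 2) := Real.sqrt_le_sqrt (by rw [div_le_iff₀ hT]; linarith [hs.2])
      _ = b := Real.sqrt_sq hb

theorem monotone_sqrt_div {T : ℝ} (hT : 0 ≤ T) : Monotone fun s : ℝ => √(s / T) :=
  fun _ _ hxy => Real.sqrt_le_sqrt (div_le_div_of_nonneg_right hxy hT)

theorem monotoneOn_sq_one_sub_sqrt_div_pow_mul {ℓ : ℕ} (hℓ : 2 ≤ ℓ) {T : ℝ} (hT : 0 < T) :
    MonotoneOn (fun s => ((1 - √(s / T)) ^ (ℓ - 1) * √(s / T)) ^ 2)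
      (Icc 0 (T * (ℓ : ℝ)⁻¹ ^ 2)) := by
  have hinv : (ℓ : ℝ)⁻¹ ≤ 1 := inv_le_one_of_one_le₀ (by exact_mod_cast (by omega : 1 ≤ ℓ))
  refine ((pow_left_monotoneOn (n := 2)).comp (monotoneOn_one_sub_pow_mul hℓ)
    fun v hv => one_sub_pow_mul_nonneg ℓ ⟨hv.1, hv.2.trans hinv⟩).comp
    ((monotone_sqrt_div hT.le).monotoneOn _) ?_
  simpa using mapsTo_sqrt_div_Icc (a := 0) (b := (ℓ : ℝ)⁻¹) hT le_rfl (by positivity)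

theorem antitoneOn_sq_one_sub_sqrt_div_pow_mul {ℓ : ℕ} (hℓ : 2 ≤ ℓ) {T : ℝ} (hT : 0 < T) :
    AntitoneOn (fun s => ((1 - √(s / T)) ^ (ℓ - 1) * √(s / T)) ^ 2)
      (Icc (T * (ℓ : ℝ)⁻¹ ^ 2) T) := by
  have hinv : (0 : ℝ) ≤ (ℓ : ℝ)⁻¹ := by positivity
  refine ((pow_left_monotoneOn (n := 2)).comp_AntitoneOn (antitoneOn_one_sub_pow_mul hℓ)
    fun v hv => one_sub_pow_mul_nonneg ℓ ⟨hinv.trans hv.1, hv.2⟩).comp_MonotoneOn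
    ((monotone_sqrt_div hT.le).monotoneOn _) ?_
  simpa using mapsTo_sqrt_div_Icc (b := 1) hT hinv zero_le_one

theorem sq_one_sub_sqrt_div_pow_mul_le {ℓ : ℕ} (hℓ : 2 ≤ ℓ) {T x : ℝ} (hT : 0 < T)
    (hx : x ∈ Icc 0 T) : ((1 - √(x / T)) ^ (ℓ - 1) * √(x / T)) ^ 2 ≤ 1 / 16 := by
  have hv := mapsTo_sqrt_div_Icc hT le_rfl zero_le_one (by simpa using hx)
  calc _ ≤ (1 / 4 : ℝ) ^ 2 :=
        pow_le_pow_left₀ (one_sub_pow_mul_nonneg ℓ hv) (one_sub_pow_mul_le hℓ hv) 2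
    _ = 1 / 16 := by norm_num

theorem sum_range_succ_le_integral_add_of_unimodal {G : ℝ → ℝ} {m N : ℕ} (hG : Continuous G)
    (hmN : m + 1 ≤ N) (hmono : MonotoneOn G (Icc 0 m)) (hanti : AntitoneOn G (Icc (m + 1 : ℕ) N))
    (hnonneg : ∀ x ∈ Icc (m : ℝ) (m + 1), 0 ≤ G x) :
    ∑ s ∈ Finset.range (N + 1), G s ≤ (∫ x in (0 : ℝ)..N, G x) + (G m + G (m + 1)) := by
  have hsplit : ∑ s ∈ Finset.range (N + 1), G s
      = ∑ s ∈ Finset.Ico 0 m, G s + (G m + G (m + 1)) + ∑ s ∈ Finset.Ico (m + 1) N, G ↑(s + 1) := by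
    rw [Finset.range_eq_Ico, ← Finset.sum_Ico_consecutive _ (Nat.zero_le (m + 2)) (by omega),
      Finset.sum_Ico_add' (fun s : ℕ => G s), Finset.sum_Ico_succ_top (by omega),
      Finset.sum_Ico_succ_top (Nat.zero_le m)]
    push_cast
    ring
  have hleft : ∑ s ∈ Finset.Ico 0 m, G s ≤ ∫ x in (0 : ℝ)..m, G x := by
    simpa using MonotoneOn.sum_le_integral_Ico (Nat.zero_le m) (by simpa using hmono)
  have hright := hanti.sum_le_integral_Ico hmN
  have hmiddle : 0 ≤ ∫ x in (m : ℝ)..(m + 1 : ℕ), G x :=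
    integral_nonneg (by push_cast; linarith) fun x hx => hnonneg x (by push_cast at hx; exact hx)
  have hint : ∀ a b : ℝ, IntervalIntegrable G MeasureTheory.volume a b :=
    fun a b => hG.intervalIntegrable a b
  rw [hsplit, ← integral_add_adjacent_intervals (hint 0 m) (hint m N),
    ← integral_add_adjacent_intervals (hint m (m + 1 : ℕ)) (hint _ N)]
  linarith

theorem sum_range_sq_one_sub_sqrt_pow_mul_le {ℓ N : ℕ} (hℓ : 2 ≤ ℓ) (hN : 1 ≤ N) :
    ∑ s ∈ Finset.range (N + 1), ((1 - √((s : ℝ) / N)) ^ (ℓ - 1) * √((s : ℝ) / N)) ^ 2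
      ≤ (∫ s in (0 : ℝ)..N, ((1 - √(s / N)) ^ (ℓ - 1) * √(s / N)) ^ 2) + 1 / 8 := by
  have hNpos : (0 : ℝ) < N := by exact_mod_cast hN
  have hℓ' : (2 : ℝ) ≤ ℓ := by exact_mod_cast hℓ
  set c : ℝ := N * (ℓ : ℝ)⁻¹ ^ 2
  set m : ℕ := ⌊c⌋₊
  have hmc : (m : ℝ) ≤ c := Nat.floor_le (by positivity)
  have hcm : c < m + 1 := Nat.lt_floor_add_one c
  have hcN : c ≤ N / 4 := by
    have : (ℓ : ℝ)⁻¹ ^ 2 ≤ 1 / 4 := by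
      rw [inv_pow, ← one_div]; exact one_div_le_one_div_of_le (by norm_num) (by nlinarith)
    nlinarith
  have hmN : m + 1 ≤ N := by
    have : (m : ℝ) < N := by linarith
    exact_mod_cast this
  have hsum := sum_range_succ_le_integral_add_of_unimodal (by fun_prop) hmN
    ((monotoneOn_sq_one_sub_sqrt_div_pow_mul hℓ hNpos).mono (Icc_subset_Icc le_rfl hmc))
    ((antitoneOn_sq_one_sub_sqrt_div_pow_mul hℓ hNpos).mono
      (Icc_subset_Icc (by push_cast; linarith) le_rfl))
    (fun x _ => sq_nonneg _)
  have hm1 : (m : ℝ) + 1 ≤ N := by exact_mod_cast hmN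
  linarith [sq_one_sub_sqrt_div_pow_mul_le hℓ hNpos ⟨m.cast_nonneg, by linarith⟩,
    sq_one_sub_sqrt_div_pow_mul_le hℓ hNpos ⟨by positivity, hm1⟩]

/-- With `f_{ℓ−1}(s) = (1−v)^{ℓ−1} v`, `v = √(s/(τ−1))`:
`∫_0^{τ−1} f_{ℓ−1}(s)² ds = 2(τ−1)(2ℓ−2)!·3!/(2ℓ+2)! ≤ 12(τ−1)/(2ℓ)⁴`, and hence
`∑_{s=τ₀}^{τ−1} f_{ℓ−1}(s)² ≤ 1 + (τ−1)/ℓ⁴`. -/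
theorem stmt13 (ℓ τ : ℕ) (hℓ : 2 ≤ ℓ) (hτ : 2 ≤ τ) :
    ((∫ s in (0 : ℝ)..((τ : ℝ) - 1),
        ((1 - Real.sqrt (s / ((τ : ℝ) - 1))) ^ (ℓ - 1) * Real.sqrt (s / ((τ : ℝ) - 1))) ^ 2)
      = 2 * ((τ : ℝ) - 1) * ((2 * ℓ - 2).factorial : ℝ) * (Nat.factorial 3 : ℝ)
          / ((2 * ℓ + 2).factorial : ℝ)) ∧
    (2 * ((τ : ℝ) - 1) * ((2 * ℓ - 2).factorial : ℝ) * (Nat.factorial 3 : ℝ)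
          / ((2 * ℓ + 2).factorial : ℝ)
      ≤ 12 * ((τ : ℝ) - 1) / (2 * (ℓ : ℝ)) ^ 4) ∧
    (∀ τ₀ : ℕ,
      ∑ s ∈ Finset.Icc τ₀ (τ - 1),
          ((1 - Real.sqrt ((s : ℝ) / ((τ : ℝ) - 1))) ^ (ℓ - 1)
            * Real.sqrt ((s : ℝ) / ((τ : ℝ) - 1))) ^ 2
        ≤ 1 + ((τ : ℝ) - 1) / (ℓ : ℝ) ^ 4) := by
  obtain ⟨N, rfl⟩ : ∃ N, τ = N + 1 := ⟨τ - 1, by omega⟩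
  have hN : (0 : ℝ) < N := by exact_mod_cast (by omega : 0 < N)
  simp only [Nat.cast_add, Nat.cast_one, add_sub_cancel_right, Nat.add_sub_cancel]
  have hint := integral_sq_one_sub_sqrt_pow_mul (by omega : 1 ≤ ℓ) hN
  have hratio := mul_factorial_div_factorial_le_div_pow_four (by omega : 1 ≤ ℓ) hN.le
  refine ⟨hint, hratio, fun τ₀ => ?_⟩
  calc _ ≤ ∑ s ∈ Finset.range (N + 1), ((1 - √((s : ℝ) / N)) ^ (ℓ - 1) * √((s : ℝ) / N)) ^ 2 :=
        Finset.sum_le_sum_of_subset_of_nonneg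
          (fun s hs => Finset.mem_range.2 (Nat.lt_succ_of_le (Finset.mem_Icc.1 hs).2))
          (fun _ _ _ => sq_nonneg _)
    _ ≤ 12 * N / (2 * ℓ) ^ 4 + 1 / 8 := by
      linarith [sum_range_sq_one_sub_sqrt_pow_mul_le hℓ (by omega : 1 ≤ N)]
    _ ≤ 1 + N / ℓ ^ 4 := by
      have hquarter : 12 * (N : ℝ) / (2 * ℓ) ^ 4 = 3 / 4 * (N / ℓ ^ 4) := by ring
      have : 0 ≤ (N : ℝ) / ℓ ^ 4 := by positivity
      linarith
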